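/- arXiv:1809.05393 — 3 statements merged into one kernel-verified Lean document; each statement's English description precedes it below -/
import Mathlib

section
/- (Klein's lemma) If $f : \mathbb{R} \to \mathbb{R}$ is convex, then the map $X \mapsto \int f \, dL_n^X = \frac{1}{n}\sum_{i=1}^n f(\lambda_i(X))$ is a convex function on the real vector space of Hermitian $n\times n$ complex matrices. -/
/-!
Let `Z = t • X + (1 - t) • Y` and let `U` be a unitary diagonalising `Z`. Then
`λᵢ(Z) = t (Uᴴ X U)ᵢᵢ + (1 - t) (Uᴴ Y U)ᵢᵢ`, so convexity of `f` bounds `∑ f (λᵢ(Z))` by the same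
combination of `∑ f ((Uᴴ X U)ᵢᵢ)` and `∑ f ((Uᴴ Y U)ᵢᵢ)`. If `V` diagonalises a Hermitian `A`, the
diagonal of `Uᴴ A U` is `M λ(A)` with `Mᵢⱼ = ‖(Uᴴ V)ᵢⱼ‖²` doubly stochastic, and Jensen's inequality
applied row by row gives `∑ f ((Uᴴ A U)ᵢᵢ) ≤ ∑ f (λᵢ(A))`.
-/
open Matrix

namespace Matrix

variable {n 𝕜 : Type*} [Fintype n] [DecidableEq n] [RCLike 𝕜]

lemma mul_diagonal_mul_conjTranspose_apply_self (W : Matrix n n 𝕜) (d : n → ℝ) (i : n) :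
    (W * diagonal (RCLike.ofReal ∘ d : n → 𝕜) * Wᴴ) i i = ((∑ j, ‖W i j‖ ^ 2 * d j : ℝ) : 𝕜) := by
  simp only [mul_apply, diagonal_apply, conjTranspose_apply, ← starRingEnd_apply, mul_ite,
    mul_zero, Finset.sum_ite_eq', Finset.mem_univ, if_true, Function.comp_apply]
  push_cast
  refine Finset.sum_congr rfl fun j _ => ?_
  rw [mul_right_comm, RCLike.mul_conj]

lemma sum_norm_sq_row_of_mem_unitaryGroup {W : Matrix n n 𝕜} (hW : W ∈ unitaryGroup n 𝕜)
    (i : n) : ∑ j, ‖W i j‖ ^ 2 = 1 := by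
  have h := mul_diagonal_mul_conjTranspose_apply_self W (fun _ => 1) i
  simp only [Function.comp_def, RCLike.ofReal_one, diagonal_one, mul_one,
    ← star_eq_conjTranspose, mem_unitaryGroup_iff.mp hW, one_apply_eq] at h
  exact_mod_cast h.symm

lemma norm_sq_mem_doublyStochastic {W : Matrix n n 𝕜} (hW : W ∈ unitaryGroup n 𝕜) :
    W.map (‖·‖ ^ 2) ∈ doublyStochastic ℝ n := by
  refine mem_doublyStochastic_iff_sum.mpr
    ⟨fun i j => by simp only [map_apply]; positivity, sum_norm_sq_row_of_mem_unitaryGroup hW,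
      fun j => ?_⟩
  simpa [star_eq_conjTranspose] using
    sum_norm_sq_row_of_mem_unitaryGroup (Unitary.star_mem hW) j

end Matrix

lemma ConvexOn.sum_map_mulVec_le {n : Type*} [Fintype n] [DecidableEq n] {s : Set ℝ}
    {f : ℝ → ℝ} (hf : ConvexOn ℝ s f) {M : Matrix n n ℝ} (hM : M ∈ doublyStochastic ℝ n)
    {x : n → ℝ} (hx : ∀ i, x i ∈ s) :
    ∑ i, f ((M *ᵥ x) i) ≤ ∑ i, f (x i) :=
  calc ∑ i, f ((M *ᵥ x) i)
      ≤ ∑ i, ∑ j, M i j * f (x j) := Finset.sum_le_sum fun i _ =>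
        hf.map_sum_le (fun j _ => nonneg_of_mem_doublyStochastic hM)
          (sum_row_of_mem_doublyStochastic hM i) (fun j _ => hx j)
    _ = ∑ j, f (x j) := by
        rw [Finset.sum_comm]
        simp only [← Finset.sum_mul, sum_col_of_mem_doublyStochastic hM, one_mul]

namespace Matrix.IsHermitian

variable {n 𝕜 : Type*} [Fintype n] [DecidableEq n] [RCLike 𝕜] {A : Matrix n n 𝕜}

lemma eigenvalues_eq_re_diag_conj (hA : A.IsHermitian) (i : n) :
    hA.eigenvalues i =
      RCLike.re (((hA.eigenvectorUnitary : Matrix n n 𝕜)ᴴ * A * hA.eigenvectorUnitary) i i) := by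
  have h := hA.conjStarAlgAut_star_eigenvectorUnitary
  rw [Unitary.conjStarAlgAut_star_apply, star_eq_conjTranspose] at h
  simp [h]

lemma re_diag_conj_eq_mulVec_eigenvalues (hA : A.IsHermitian) (U : Matrix n n 𝕜) :
    (fun i => RCLike.re ((Uᴴ * A * U) i i)) =
      (Uᴴ * hA.eigenvectorUnitary).map (‖·‖ ^ 2) *ᵥ hA.eigenvalues := by
  set V : Matrix n n 𝕜 := ↑hA.eigenvectorUnitary
  have hA' : A = V * diagonal (RCLike.ofReal ∘ hA.eigenvalues) * Vᴴ := by
    conv_lhs => rw [hA.spectral_theorem, Unitary.conjStarAlgAut_apply, star_eq_conjTranspose]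
  have hconj : Uᴴ * A * U = (Uᴴ * V) * diagonal (RCLike.ofReal ∘ hA.eigenvalues) * (Uᴴ * V)ᴴ := by
    conv_lhs => rw [hA']
    rw [conjTranspose_mul, conjTranspose_conjTranspose]
    simp only [Matrix.mul_assoc]
  ext i
  rw [hconj, mul_diagonal_mul_conjTranspose_apply_self, RCLike.ofReal_re]
  simp [mulVec, dotProduct]

lemma sum_map_re_diag_conj_le (hA : A.IsHermitian) {s : Set ℝ} {f : ℝ → ℝ}
    (hf : ConvexOn ℝ s f) (hs : ∀ i, hA.eigenvalues i ∈ s) {U : Matrix n n 𝕜}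
    (hU : U ∈ unitaryGroup n 𝕜) :
    ∑ i, f (RCLike.re ((Uᴴ * A * U) i i)) ≤ ∑ i, f (hA.eigenvalues i) := by
  have hW : Uᴴ * hA.eigenvectorUnitary ∈ unitaryGroup n 𝕜 :=
    mul_mem (star_eq_conjTranspose U ▸ Unitary.star_mem hU) hA.eigenvectorUnitary.2
  simpa only [← re_diag_conj_eq_mulVec_eigenvalues] using
    hf.sum_map_mulVec_le (norm_sq_mem_doublyStochastic hW) hs

lemma sum_map_eigenvalues_convexComb_le {f : ℝ → ℝ} (hf : ConvexOn ℝ Set.univ f)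
    {X Y : Matrix n n 𝕜} (hX : X.IsHermitian) (hY : Y.IsHermitian) {t : ℝ} (ht0 : 0 ≤ t)
    (ht1 : t ≤ 1) (hZ : (t • X + (1 - t) • Y).IsHermitian) :
    ∑ i, f (hZ.eigenvalues i) ≤
      t * ∑ i, f (hX.eigenvalues i) + (1 - t) * ∑ i, f (hY.eigenvalues i) := by
  obtain ⟨U, hU, hdiag⟩ : ∃ U ∈ unitaryGroup n 𝕜, ∀ i, hZ.eigenvalues i =
      t * RCLike.re ((Uᴴ * X * U) i i) + (1 - t) * RCLike.re ((Uᴴ * Y * U) i i) :=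
    ⟨_, hZ.eigenvectorUnitary.2, fun i => by
      rw [hZ.eigenvalues_eq_re_diag_conj]
      simp [Matrix.mul_add, Matrix.add_mul, RCLike.smul_re]⟩
  calc ∑ i, f (hZ.eigenvalues i)
      ≤ ∑ i, (t * f (RCLike.re ((Uᴴ * X * U) i i))
          + (1 - t) * f (RCLike.re ((Uᴴ * Y * U) i i))) :=
        Finset.sum_le_sum fun i _ => hdiag i ▸
          hf.2 (Set.mem_univ _) (Set.mem_univ _) ht0 (sub_nonneg.mpr ht1) (add_sub_cancel t 1)
    _ = t * ∑ i, f (RCLike.re ((Uᴴ * X * U) i i))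
          + (1 - t) * ∑ i, f (RCLike.re ((Uᴴ * Y * U) i i)) := by
        rw [Finset.sum_add_distrib, Finset.mul_sum, Finset.mul_sum]
    _ ≤ t * ∑ i, f (hX.eigenvalues i) + (1 - t) * ∑ i, f (hY.eigenvalues i) :=
        add_le_add
          (mul_le_mul_of_nonneg_left (hX.sum_map_re_diag_conj_le hf (fun _ => trivial) hU) ht0)
          (mul_le_mul_of_nonneg_left (hY.sum_map_re_diag_conj_le hf (fun _ => trivial) hU)
            (sub_nonneg.mpr ht1))

end Matrix.IsHermitian

theorem stmt3 {n : ℕ} (f : ℝ → ℝ) (hf : ConvexOn ℝ Set.univ f)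
    (X Y : Matrix (Fin n) (Fin n) ℂ) (hX : X.IsHermitian) (hY : Y.IsHermitian)
    (t : ℝ) (ht0 : 0 ≤ t) (ht1 : t ≤ 1)
    (hZ : (t • X + (1 - t) • Y).IsHermitian) :
    (1 / (n : ℝ)) * ∑ i : Fin n, f (hZ.eigenvalues i)
      ≤ t * ((1 / (n : ℝ)) * ∑ i : Fin n, f (hX.eigenvalues i))
        + (1 - t) * ((1 / (n : ℝ)) * ∑ i : Fin n, f (hY.eigenvalues i)) := by
  rw [mul_left_comm t, mul_left_comm (1 - t), ← mul_add]
  exact mul_le_mul_of_nonneg_left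
    (Matrix.IsHermitian.sum_map_eigenvalues_convexComb_le hf hX hY ht0 ht1 hZ) (by positivity)
end

section
/- Let $X$ be an $n\times n$ Hermitian complex matrix with rows $x_1, \ldots, x_n$ and eigenvalues $\lambda_1, \ldots, \lambda_n$. Then for every $0 < r \le 2$, $\sum_{i=1}^n |\lambda_i|^r \le \sum_{i=1}^n \|x_i\|_2^r$, where $\|x_i\|_2$ is the Euclidean norm of the $i$-th row. -/
/-!
Let `U` be the unitary matrix of eigenvectors of `X`, so that `X U = U diag(λ)`. The matrix
`W = (|U_jk|²)` is doubly stochastic, and since right multiplication by `U` preserves row norms,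
`‖x_j‖² = ∑_k W_jk λ_k²`. For `0 < r ≤ 2` the function `t ↦ √t ^ r` is concave on `[0, ∞)`, so
Jensen's inequality applied row by row to `W`, together with `∑_j W_jk = 1`, gives
`∑_k |λ_k|^r ≤ ∑_j (∑_k W_jk λ_k²)^(r/2) = ∑_j ‖x_j‖^r`.
-/

open Matrix

namespace Matrix

variable {m n 𝕜 : Type*} [RCLike 𝕜]

lemma mul_conjTranspose_self_apply_self [Fintype n] (A : Matrix m n 𝕜) (i : m) :
    (A * Aᴴ) i i = ∑ j, ((‖A i j‖ ^ 2 : ℝ) : 𝕜) := by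
  simp [mul_apply, RCLike.mul_conj]

lemma conjTranspose_mul_self_apply_self [Fintype m] (A : Matrix m n 𝕜) (j : n) :
    (Aᴴ * A) j j = ∑ i, ((‖A i j‖ ^ 2 : ℝ) : 𝕜) := by
  simp [mul_apply, RCLike.conj_mul]

variable [Fintype n] [DecidableEq n]

lemma sum_norm_sq_mul_apply_of_mem_unitaryGroup (A : Matrix m n 𝕜) {U : Matrix n n 𝕜}
    (hU : U ∈ unitaryGroup n 𝕜) (i : m) :
    ∑ k, ‖(A * U) i k‖ ^ 2 = ∑ k, ‖A i k‖ ^ 2 := by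
  have h : (A * U) * (A * U)ᴴ = A * Aᴴ := by
    rw [conjTranspose_mul, Matrix.mul_assoc, ← Matrix.mul_assoc U, ← star_eq_conjTranspose,
      mem_unitaryGroup_iff.mp hU, Matrix.one_mul]
  have h_ii := congr_fun₂ h i i
  rw [mul_conjTranspose_self_apply_self, mul_conjTranspose_self_apply_self] at h_ii
  exact_mod_cast h_ii

lemma of_norm_sq_mem_doublyStochastic {U : Matrix n n 𝕜} (hU : U ∈ unitaryGroup n 𝕜) :
    of (fun i j ↦ ‖U i j‖ ^ 2) ∈ doublyStochastic ℝ n := by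
  refine mem_doublyStochastic_iff_sum.mpr ⟨fun _ _ ↦ sq_nonneg _, fun i ↦ ?_, fun j ↦ ?_⟩
  · have h_ii := congr_fun₂ (mem_unitaryGroup_iff.mp hU) i i
    rw [star_eq_conjTranspose, mul_conjTranspose_self_apply_self, one_apply_eq] at h_ii
    exact_mod_cast h_ii
  · have h_jj := congr_fun₂ (mem_unitaryGroup_iff'.mp hU) j j
    rw [star_eq_conjTranspose, conjTranspose_mul_self_apply_self, one_apply_eq] at h_jj
    exact_mod_cast h_jj

lemma IsHermitian.mul_eigenvectorUnitary {A : Matrix n n 𝕜} (hA : A.IsHermitian) :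
    A * (hA.eigenvectorUnitary : Matrix n n 𝕜) =
      (hA.eigenvectorUnitary : Matrix n n 𝕜) * diagonal (RCLike.ofReal ∘ hA.eigenvalues) := by
  conv_lhs => arg 1; rw [hA.spectral_theorem]
  simp [Matrix.mul_assoc]

lemma IsHermitian.sum_norm_sq_apply_eq_mulVec {A : Matrix n n 𝕜} (hA : A.IsHermitian) (i : n) :
    ∑ k, ‖A i k‖ ^ 2 =
      (of (fun i j ↦ ‖(hA.eigenvectorUnitary : Matrix n n 𝕜) i j‖ ^ 2) *ᵥ
        fun k ↦ hA.eigenvalues k ^ 2) i := by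
  rw [← sum_norm_sq_mul_apply_of_mem_unitaryGroup A hA.eigenvectorUnitary.2,
    hA.mul_eigenvectorUnitary]
  simp [mulVec, dotProduct, mul_diagonal, norm_mul, mul_pow]

end Matrix

theorem ConcaveOn.sum_le_sum_map_mulVec {n : Type*} [Fintype n] [DecidableEq n] {s : Set ℝ}
    {f : ℝ → ℝ} (hf : ConcaveOn ℝ s f) {M : Matrix n n ℝ} (hM : M ∈ doublyStochastic ℝ n)
    {x : n → ℝ} (hx : ∀ i, x i ∈ s) :
    ∑ i, f (x i) ≤ ∑ i, f ((M *ᵥ x) i) := by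
  rw [← sum_mulVec_of_mem_doublyStochastic hM]
  exact Finset.sum_le_sum fun i _ ↦
    hf.le_map_sum (fun _ _ ↦ nonneg_of_mem_doublyStochastic hM)
      (sum_row_of_mem_doublyStochastic hM i) fun j _ ↦ hx j

lemma Real.concaveOn_sqrt_rpow {r : ℝ} (hr0 : 0 ≤ r) (hr2 : r ≤ 2) :
    ConcaveOn ℝ (Set.Ici 0) fun x : ℝ ↦ √x ^ r :=
  (Real.concaveOn_rpow (by positivity) (by linarith)).congr
    fun _ hx ↦ Real.rpow_div_two_eq_sqrt r hx

theorem stmt5 {n : ℕ} (X : Matrix (Fin n) (Fin n) ℂ) (hX : X.IsHermitian)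
    (r : ℝ) (hr0 : 0 < r) (hr2 : r ≤ 2) :
    ∑ i : Fin n, |hX.eigenvalues i| ^ r
      ≤ ∑ i : Fin n, (Real.sqrt (∑ j : Fin n, ‖X i j‖ ^ 2)) ^ r := by
  have h := (Real.concaveOn_sqrt_rpow hr0.le hr2).sum_le_sum_map_mulVec
    (of_norm_sq_mem_doublyStochastic hX.eigenvectorUnitary.2)
    (x := fun k ↦ hX.eigenvalues k ^ 2) fun _ ↦ Set.mem_Ici.mpr (sq_nonneg _)
  simpa only [Real.sqrt_sq_eq_abs, ← hX.sum_norm_sq_apply_eq_mulVec] using h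
end

section
/- Let $x$ be a random variable with $l(t) := \mathbb{E}[x^2 \mathbf{1}_{\{|x| \le t\}}]$ slowly varying at infinity and $\mathbb{E} x^2 = \infty$. Then $\mathbb{E}[|x| \mathbf{1}_{\{|x| > t\}}] = o(l(t)/t)$ as $t \to \infty$. -/
open MeasureTheory Filter Topology

/-!
Write `l(t) = E[x²; |x| ≤ t]` and `f(t) = E[|x|; |x| > t]`. Splitting `{|x| > t}` at `2t` and using
`t|x| ≤ x²` on `{t < |x| ≤ 2t}` gives `t f(t) ≤ l(2t) - l(t) + t f(2t)`. Iterating along `2ⁿt`, with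
`l(2s) ≤ (1 + ε) l(s)` for large `s`, bounds `t f(t)` by `ε l(t) ∑ ((1 + ε)/2)ⁿ` plus a remainder
`t f(2ⁿt) → 0`, so `t f(t) / l(t) ≤ 2ε / (1 - ε)` eventually.
-/

lemma le_div_one_sub_of_le_mul_pow_add {a : ℕ → ℝ} {c ρ : ℝ} (hρ₀ : 0 ≤ ρ) (hρ₁ : ρ < 1)
    (ha : Tendsto a atTop (𝓝 0)) (h : ∀ n, a n ≤ c * ρ ^ n + a (n + 1)) :
    a 0 ≤ c / (1 - ρ) := by
  have hpartial : ∀ n, a 0 ≤ ∑ k ∈ Finset.range n, c * ρ ^ k + a n := by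
    intro n
    induction n with
    | zero => simp
    | succ n ih => rw [Finset.sum_range_succ]; linarith [h n]
  have hlim := ((hasSum_geometric_of_lt_one hρ₀ hρ₁).mul_left c).tendsto_sum_nat.add ha
  rw [add_zero] at hlim
  simpa [div_eq_mul_inv] using ge_of_tendsto' hlim hpartial

lemma le_pow_mul_of_le_mul_two {L : ℝ → ℝ} {c T t : ℝ} (hc : 0 ≤ c)
    (h : ∀ s, T ≤ s → L (2 * s) ≤ c * L s) (hTt : T ≤ t) (ht : 0 ≤ t) (n : ℕ) :
    L (2 ^ n * t) ≤ c ^ n * L t := by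
  induction n with
  | zero => simp
  | succ n ih =>
    have hTs : T ≤ 2 ^ n * t := hTt.trans (le_mul_of_one_le_left ht (one_le_pow₀ one_le_two))
    calc L (2 ^ (n + 1) * t) = L (2 * (2 ^ n * t)) := by ring_nf
      _ ≤ c * L (2 ^ n * t) := h _ hTs
      _ ≤ c * (c ^ n * L t) := mul_le_mul_of_nonneg_left ih hc
      _ = c ^ (n + 1) * L t := by ring

section Doubling

variable {L F : ℝ → ℝ}

lemma eventually_mul_le_of_le_sub_add (hL : ∀ᶠ t in atTop, 0 < L t)
    (hL₂ : Tendsto (fun t => L (2 * t) / L t) atTop (𝓝 1)) (hF : Tendsto F atTop (𝓝 0))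
    (hkey : ∀ t, t * F t ≤ L (2 * t) - L t + t * F (2 * t)) {ε : ℝ} (hε₀ : 0 < ε) (hε₁ : ε < 1) :
    ∀ᶠ t in atTop, t * F t ≤ 2 * ε / (1 - ε) * L t := by
  obtain ⟨T, hT⟩ := eventually_atTop.1 <|
    (hL.and (hL₂.eventually_le_const (by linarith : (1 : ℝ) < 1 + ε))).and (eventually_gt_atTop 0)
  have hdouble : ∀ s, T ≤ s → L (2 * s) ≤ (1 + ε) * L s := fun s hs => by
    obtain ⟨⟨hpos, hratio⟩, -⟩ := hT s hs
    rwa [div_le_iff₀ hpos] at hratio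
  filter_upwards [eventually_ge_atTop T] with t ht
  have ht₀ : 0 < t := (hT t ht).2
  set ρ := (1 + ε) / 2
  have hstep : ∀ n : ℕ, t * F (2 ^ n * t) ≤ ε * L t * ρ ^ n + t * F (2 ^ (n + 1) * t) := by
    intro n
    set s := 2 ^ n * t
    have hTs : T ≤ s := ht.trans (le_mul_of_one_le_left ht₀.le (one_le_pow₀ one_le_two))
    have hgrowth := le_pow_mul_of_le_mul_two (by linarith) hdouble ht ht₀.le n
    have hs : s * F s ≤ ε * (1 + ε) ^ n * L t + s * F (2 * s) := by
      linarith [hkey s, hdouble s hTs, mul_le_mul_of_nonneg_left hgrowth hε₀.le]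
    have h2s : 2 * s = 2 ^ (n + 1) * t := by ring
    have h2n : (0 : ℝ) < 2 ^ n := by positivity
    refine le_of_mul_le_mul_left ?_ h2n
    calc 2 ^ n * (t * F s) = s * F s := by ring
      _ ≤ ε * (1 + ε) ^ n * L t + s * F (2 * s) := hs
      _ = 2 ^ n * (ε * L t * ρ ^ n + t * F (2 ^ (n + 1) * t)) := by
        rw [h2s, div_pow]; field_simp; ring
  have hrem : Tendsto (fun n : ℕ => t * F (2 ^ n * t)) atTop (𝓝 0) := by
    have h2n : Tendsto (fun n : ℕ => (2 : ℝ) ^ n * t) atTop atTop :=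
      (tendsto_pow_atTop_atTop_of_one_lt one_lt_two).atTop_mul_const ht₀
    simpa using (hF.comp h2n).const_mul t
  calc t * F t = t * F (2 ^ 0 * t) := by simp
    _ ≤ ε * L t / (1 - ρ) :=
      le_div_one_sub_of_le_mul_pow_add (by positivity) (by simp only [ρ]; linarith) hrem hstep
    _ = 2 * ε / (1 - ε) * L t := by
      rw [show 1 - ρ = (1 - ε) / 2 by ring]
      field_simp

theorem tendsto_mul_div_of_le_sub_add (hL : ∀ᶠ t in atTop, 0 < L t)
    (hL₂ : Tendsto (fun t => L (2 * t) / L t) atTop (𝓝 1)) (hF₀ : ∀ t, 0 ≤ F t)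
    (hF : Tendsto F atTop (𝓝 0)) (hkey : ∀ t, t * F t ≤ L (2 * t) - L t + t * F (2 * t)) :
    Tendsto (fun t => t * F t / L t) atTop (𝓝 0) := by
  refine tendsto_order.2 ⟨fun a ha => ?_, fun a ha => ?_⟩
  · filter_upwards [hL, eventually_ge_atTop 0] with t hLt ht
    exact ha.trans_le (div_nonneg (mul_nonneg ht (hF₀ t)) hLt.le)
  · set ε := min (1 / 2) (a / 8)
    have hε₀ : 0 < ε := lt_min (by norm_num) (by linarith)
    have hε₁ : ε ≤ 1 / 2 := min_le_left _ _
    have hεa : ε ≤ a / 8 := min_le_right _ _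
    filter_upwards [hL, eventually_mul_le_of_le_sub_add hL hL₂ hF hkey hε₀ (by linarith)]
      with t hLt hbound
    calc t * F t / L t ≤ 2 * ε / (1 - ε) := (div_le_iff₀ hLt).2 hbound
      _ ≤ 4 * ε := by rw [div_le_iff₀ (by linarith)]; nlinarith
      _ < a := by linarith

end Doubling

section Moments

variable {Ω : Type*} [MeasurableSpace Ω] (μ : Measure Ω) (x : Ω → ℝ)

noncomputable def truncatedSecondMoment (t : ℝ) : ℝ :=
  ∫ ω, Set.indicator {ω | |x ω| ≤ t} (fun ω => x ω ^ 2) ω ∂μ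

noncomputable def tailFirstMoment (t : ℝ) : ℝ :=
  ∫ ω, Set.indicator {ω | t < |x ω|} (fun ω => |x ω|) ω ∂μ

variable {μ x}

lemma truncatedSecondMoment_nonneg (t : ℝ) : 0 ≤ truncatedSecondMoment μ x t :=
  integral_nonneg (Set.indicator_nonneg fun _ _ => sq_nonneg _)

lemma tailFirstMoment_nonneg (t : ℝ) : 0 ≤ tailFirstMoment μ x t :=
  integral_nonneg (Set.indicator_nonneg fun _ _ => abs_nonneg _)

lemma measurableSet_abs_le (hx : Measurable x) (t : ℝ) : MeasurableSet {ω | |x ω| ≤ t} :=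
  measurableSet_le hx.abs measurable_const

lemma measurableSet_lt_abs (hx : Measurable x) (t : ℝ) : MeasurableSet {ω | t < |x ω|} :=
  measurableSet_lt measurable_const hx.abs

lemma integrable_indicator_abs_le_sq [IsFiniteMeasure μ] (hx : Measurable x) (t : ℝ) :
    Integrable (Set.indicator {ω | |x ω| ≤ t} (fun ω => x ω ^ 2)) μ := by
  refine Integrable.of_bound
    ((hx.pow_const 2).indicator (measurableSet_abs_le hx t)).aestronglyMeasurable (t ^ 2)
    (ae_of_all _ fun ω => ?_)
  rw [Real.norm_eq_abs, abs_of_nonneg (Set.indicator_nonneg (fun _ _ => sq_nonneg _) ω)]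
  by_cases h : |x ω| ≤ t
  · rw [Set.indicator_of_mem (by exact h), ← sq_abs]
    exact pow_le_pow_left₀ (abs_nonneg _) h 2
  · rw [Set.indicator_of_notMem (by exact h)]
    positivity

lemma monotone_truncatedSecondMoment [IsFiniteMeasure μ] (hx : Measurable x) :
    Monotone (truncatedSecondMoment μ x) := fun s t hst =>
  integral_mono (integrable_indicator_abs_le_sq hx s) (integrable_indicator_abs_le_sq hx t)
    (Set.indicator_le_indicator_of_subset (fun _ h => le_trans h hst) fun _ => sq_nonneg _)

lemma tailFirstMoment_eq_zero_of_not_integrable [IsFiniteMeasure μ] (hx : Measurable x)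
    (hint : ¬ Integrable (fun ω => |x ω|) μ) (t : ℝ) : tailFirstMoment μ x t = 0 := by
  refine integral_undef fun htail => hint ?_
  refine ((integrable_const (max t 0)).add htail).mono' hx.abs.aestronglyMeasurable
    (ae_of_all _ fun ω => ?_)
  rw [Real.norm_eq_abs, abs_abs]
  by_cases h : t < |x ω|
  · rw [Pi.add_apply, Set.indicator_of_mem (by exact h)]
    linarith [le_max_right t 0]
  · rw [Pi.add_apply, Set.indicator_of_notMem (by exact h)]
    linarith [le_max_left t 0, not_lt.1 h]

lemma tendsto_tailFirstMoment_atTop (hx : Measurable x) (hint : Integrable (fun ω => |x ω|) μ) :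
    Tendsto (tailFirstMoment μ x) atTop (𝓝 0) := by
  have hlim := tendsto_integral_filter_of_dominated_convergence (μ := μ) (l := atTop)
    (F := fun t => Set.indicator {ω | t < |x ω|} (fun ω => |x ω|)) (f := 0) (fun ω => |x ω|)
    (Eventually.of_forall fun t =>
      (hx.abs.indicator (measurableSet_lt_abs hx t)).aestronglyMeasurable)
    (Eventually.of_forall fun t => ae_of_all _ fun ω => ?_) hint (ae_of_all _ fun ω => ?_)
  · rwa [Pi.zero_def, integral_zero] at hlim
  · rw [Real.norm_eq_abs, abs_of_nonneg (Set.indicator_nonneg (fun _ _ => abs_nonneg _) ω)]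
    exact Set.indicator_le_self' (fun _ _ => abs_nonneg _) ω
  · refine tendsto_const_nhds.congr' ?_
    filter_upwards [eventually_ge_atTop |x ω|] with t ht
    rw [Set.indicator_of_notMem (show ω ∉ {ω | t < |x ω|} from not_lt.2 ht), Pi.zero_apply]

lemma mul_tailFirstMoment_le [IsFiniteMeasure μ] (hx : Measurable x)
    (hint : Integrable (fun ω => |x ω|) μ) (t : ℝ) :
    t * tailFirstMoment μ x t ≤ truncatedSecondMoment μ x (2 * t) - truncatedSecondMoment μ x t
      + t * tailFirstMoment μ x (2 * t) := by
  have htail : ∀ s, Integrable (Set.indicator {ω | s < |x ω|} (fun ω => |x ω|)) μ :=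
    fun s => hint.indicator (measurableSet_lt_abs hx s)
  have htrunc := integrable_indicator_abs_le_sq (μ := μ) hx
  have hpointwise : ∀ ω, t * Set.indicator {ω | t < |x ω|} (fun ω => |x ω|) ω ≤
      Set.indicator {ω | |x ω| ≤ 2 * t} (fun ω => x ω ^ 2) ω
        - Set.indicator {ω | |x ω| ≤ t} (fun ω => x ω ^ 2) ω
        + t * Set.indicator {ω | 2 * t < |x ω|} (fun ω => |x ω|) ω := fun ω => by
    simp only [Set.indicator_apply, Set.mem_ofPred_eq]
    split_ifs <;> nlinarith [sq_abs (x ω), abs_nonneg (x ω)]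
  have h := integral_mono ((htail t).const_mul t)
    (((htrunc _).sub (htrunc _)).add ((htail _).const_mul t)) hpointwise
  rwa [integral_add' ((htrunc _).sub (htrunc _)) ((htail _).const_mul t),
    integral_sub' (htrunc _) (htrunc _), integral_const_mul, integral_const_mul] at h

end Moments

theorem stmt13_general {Ω : Type*} [MeasurableSpace Ω] (P : Measure Ω) [IsProbabilityMeasure P]
    (x : Ω → ℝ) (hx : Measurable x)
    (l : ℝ → ℝ)
    (hl : ∀ t : ℝ, l t = ∫ ω, Set.indicator {ω | |x ω| ≤ t} (fun ω => (x ω) ^ 2) ω ∂P)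
    (hsv : ∀ lam > (0 : ℝ), Tendsto (fun t => l (lam * t) / l t) atTop (nhds 1)) :
    Tendsto (fun t : ℝ =>
      t * (∫ ω, Set.indicator {ω | t < |x ω|} (fun ω => |x ω|) ω ∂P) / l t)
      atTop (nhds 0) := by
  obtain rfl : l = truncatedSecondMoment P x := funext hl
  change Tendsto (fun t => t * tailFirstMoment P x t / truncatedSecondMoment P x t) atTop (𝓝 0)
  by_cases hint : Integrable (fun ω => |x ω|) P
  swap
  · simp [tailFirstMoment_eq_zero_of_not_integrable hx hint]
  by_cases hpos : ∃ t₀, 0 < truncatedSecondMoment P x t₀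
  · obtain ⟨t₀, ht₀⟩ := hpos
    have hl_pos : ∀ᶠ t in atTop, 0 < truncatedSecondMoment P x t :=
      eventually_atTop.2 ⟨t₀, fun t ht => ht₀.trans_le (monotone_truncatedSecondMoment hx ht)⟩
    exact tendsto_mul_div_of_le_sub_add hl_pos (hsv 2 two_pos) tailFirstMoment_nonneg
      (tendsto_tailFirstMoment_atTop hx hint) (mul_tailFirstMoment_le hx hint)
  · -- `l ≡ 0`, and the quotient is then `t * f t / 0 = 0`.
    have hzero (t : ℝ) : truncatedSecondMoment P x t = 0 :=
      le_antisymm (not_lt.1 fun h => hpos ⟨t, h⟩) (truncatedSecondMoment_nonneg t)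
    simp [hzero]

theorem stmt13 {Ω : Type*} [MeasurableSpace Ω] (P : Measure Ω) [IsProbabilityMeasure P]
    (x : Ω → ℝ) (hx : Measurable x)
    (l : ℝ → ℝ)
    (hl : ∀ t : ℝ, l t = ∫ ω, Set.indicator {ω | |x ω| ≤ t} (fun ω => (x ω) ^ 2) ω ∂P)
    (hsv : ∀ lam > (0 : ℝ), Tendsto (fun t => l (lam * t) / l t) atTop (nhds 1))
    (hinf : ¬ Integrable (fun ω => (x ω) ^ 2) P) :
    Tendsto (fun t : ℝ =>
      t * (∫ ω, Set.indicator {ω | t < |x ω|} (fun ω => |x ω|) ω ∂P) / l t)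
      atTop (nhds 0) :=
  stmt13_general P x hx l hl hsv
end
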